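/- arXiv:1112.2844 — 4 statements merged into one kernel-verified Lean document; each statement's English description precedes it below -/
import Mathlib

section
/- For every real number α and all natural numbers n and m, applying the matrix (U_a(α))^m · U_c · (U_a(α))^n to the standard basis vector e₀ of ℝ⁴ yields the vector cos((n−m)α)·e₂ + sin((n−m)α)·e₃. -/
open Real Matrix

/-- The matrix `U_a(α)` from the paper. -/
noncomputable def Ua (α : ℝ) : Matrix (Fin 4) (Fin 4) ℝ :=
  !![Real.cos α, -Real.sin α, 0, 0;
     Real.sin α,  Real.cos α, 0, 0;
     0, 0,  Real.cos α, Real.sin α;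
     0, 0, -Real.sin α, Real.cos α]

/-- The matrix `U_c` from the paper. -/
def Uc : Matrix (Fin 4) (Fin 4) ℝ :=
  !![0, 0, 1, 0;
     0, 0, 0, 1;
     1, 0, 0, 0;
     0, 1, 0, 0]

/-- The standard basis vectors of `ℝ⁴`. -/
noncomputable def e (i : Fin 4) : Fin 4 → ℝ := Pi.single i 1

/-! `Ua α` is the block rotation `diag (R α, R (-α))` and `Uc` swaps the two blocks, so
`Uc` conjugates `Ua α` into `Ua (-α)`. Hence `Ua α ^ m * Uc * Ua α ^ n = Ua ((m - n) α) * Uc`,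
which sends `e 0` to `Ua ((m - n) α) (e 2)`. -/

lemma Ua_zero : Ua 0 = 1 := by
  ext i j
  fin_cases i <;> fin_cases j <;> simp [Ua]

lemma Ua_add (α β : ℝ) : Ua (α + β) = Ua α * Ua β := by
  ext i j
  fin_cases i <;> fin_cases j <;>
    simp [Ua, Matrix.mul_apply, Fin.sum_univ_four, cos_add, sin_add] <;> ring

lemma Ua_pow (α : ℝ) (k : ℕ) : Ua α ^ k = Ua (k * α) := by
  induction k with
  | zero => simp [Ua_zero]
  | succ k ih => rw [pow_succ, ih, ← Ua_add]; push_cast; ring_nf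

lemma Uc_mul_Ua (α : ℝ) : Uc * Ua α = Ua (-α) * Uc := by
  ext i j
  fin_cases i <;> fin_cases j <;> simp [Ua, Uc, Matrix.mul_apply, Fin.sum_univ_four]

lemma Uc_mulVec_e_zero : Uc *ᵥ e 0 = e 2 := by
  ext i
  fin_cases i <;> simp [Uc, e, Matrix.mulVec, dotProduct, Fin.sum_univ_four]

lemma Ua_mulVec_e_two (θ : ℝ) : Ua θ *ᵥ e 2 = cos θ • e 2 - sin θ • e 3 := by
  ext i
  fin_cases i <;> simp [Ua, e, Matrix.mulVec, dotProduct, Fin.sum_univ_four]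

theorem Ua_pow_Uc_Ua_pow_mulVec (α : ℝ) (n m : ℕ) :
    ((Ua α) ^ m * Uc * (Ua α) ^ n).mulVec (e 0) =
      Real.cos (((n : ℝ) - m) * α) • e 2 + Real.sin (((n : ℝ) - m) * α) • e 3 := by
  have hangle : (m : ℝ) * α + -(n * α) = -(((n : ℝ) - m) * α) := by ring
  rw [Ua_pow, Ua_pow, mul_assoc, Uc_mul_Ua, ← mul_assoc, ← Ua_add, hangle, ← mulVec_mulVec,
    Uc_mulVec_e_zero, Ua_mulVec_e_two, cos_neg, sin_neg, neg_smul, sub_neg_eq_add]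
end

section
/- For every nonzero integer d, the inequality sin²(√2 · d · π) > 1/(2d² + 1) holds. -/
/-!
Let `n` be the integer nearest to `x = √2 d` and `ε = x - n`, so `|ε| ≤ 1/2` and
`|sin (π x)| = sin (π |ε|)`. Since `√2` is irrational, `x² - n² = 2 d² - n²` is a nonzero integer,
whence `1 ≤ |ε| |x + n| ≤ |ε| (2|x| + 1/2)`. Thus `sin (π |ε|) ≥ sin (π / (2|x| + 1/2))`, and
`sin t ≥ t - t³/6 ≥ 5t/6` on `[0, 1]` makes this larger than `1 / √(x² + 1)`.
-/

open Real

theorem one_le_abs_sq_sub_sq_of_irrational {x : ℝ} (hx : Irrational x) {m : ℤ} (hm : x ^ 2 = m)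
    (n : ℤ) : 1 ≤ |x ^ 2 - n ^ 2| := by
  have hne : m - n ^ 2 ≠ 0 := by
    intro h
    have hsq : x ^ 2 = (n : ℝ) ^ 2 := by rw [hm]; exact_mod_cast sub_eq_zero.mp h
    rcases sq_eq_sq_iff_eq_or_eq_neg.mp hsq with h | h
    · exact hx.ne_int n h
    · exact hx.ne_int (-n) (by push_cast; exact h)
  have := Int.one_le_abs hne
  rw [hm]
  exact_mod_cast this

theorem one_div_le_abs_sub_round {x : ℝ} (hx : 1 ≤ |x ^ 2 - round x ^ 2|) :
    1 / (2 * |x| + 1 / 2) ≤ |x - round x| := by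
  have hround := abs_sub_round x
  have hsum : |x + round x| ≤ 2 * |x| + 1 / 2 := by
    calc |x + round x| = |2 * x - (x - round x)| := by ring_nf
      _ ≤ |2 * x| + |x - round x| := abs_sub _ _
      _ ≤ 2 * |x| + 1 / 2 := by rw [abs_mul, abs_two]; linarith
  rw [div_le_iff₀ (by positivity)]
  calc 1 ≤ |x ^ 2 - round x ^ 2| := hx
    _ = |x - round x| * |x + round x| := by rw [← abs_mul]; ring_nf
    _ ≤ |x - round x| * (2 * |x| + 1 / 2) := by gcongr

theorem abs_sin_mul_pi_eq_sin_abs_sub_round (x : ℝ) :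
    |sin (x * π)| = sin (|x - round x| * π) := by
  have hshift : x * π = (x - round x) * π + round x * π := by ring
  have hsmall : |(x - round x) * π| ≤ π := by
    rw [abs_mul, abs_of_pos pi_pos]
    nlinarith [abs_sub_round x, pi_pos]
  rw [hshift, sin_add_int_mul_pi, abs_mul, abs_zpow, abs_neg, abs_one, one_zpow, one_mul,
    abs_sin_eq_sin_abs_of_abs_le_pi hsmall, abs_mul, abs_of_pos pi_pos]

theorem five_div_six_mul_le_sin {x : ℝ} (hx₀ : 0 ≤ x) (hx₁ : x ≤ 1) : 5 / 6 * x ≤ sin x := by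
  nlinarith [sin_ge_sub_cube hx₀, mul_le_mul hx₁ hx₁ hx₀ zero_le_one]

theorem sin_sq_mul_pi_gt {x : ℝ} (hx : 1 ≤ |x ^ 2 - round x ^ 2|) (hx_abs : √2 ≤ |x|) :
    1 / (x ^ 2 + 1) < sin (x * π) ^ 2 := by
  set A := 2 * |x| + 1 / 2 with hA
  have hA_gt_pi : π < A := by
    nlinarith [pi_lt_d2, sq_sqrt (zero_le_two : (0:ℝ) ≤ 2), sqrt_nonneg 2]
  have hApos : 0 < A := pi_pos.trans hA_gt_pi
  have hdist := one_div_le_abs_sub_round hx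
  have hsin : 5 / 6 * (π / A) ≤ |sin (x * π)| := by
    rw [abs_sin_mul_pi_eq_sin_abs_sub_round]
    calc 5 / 6 * (π / A) ≤ sin (π / A) :=
          five_div_six_mul_le_sin (by positivity) ((div_le_one hApos).mpr hA_gt_pi.le)
      _ ≤ sin (|x - round x| * π) := by
          apply sin_le_sin_of_le_of_le_pi_div_two (by linarith [pi_pos, div_pos pi_pos hApos])
          · nlinarith [abs_sub_round x, pi_pos]
          · rw [div_eq_mul_one_div π A, mul_comm]
            exact mul_le_mul_of_nonneg_right hdist pi_pos.le
  have hnum : 1 / (|x| ^ 2 + 1) < (5 / 6 * (π / A)) ^ 2 := by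
    have hpi : 9 * (|x| ^ 2 + 1) < π ^ 2 * (|x| ^ 2 + 1) := by
      gcongr
      nlinarith [pi_gt_three]
    rw [div_lt_iff₀ (by positivity), hA]
    field_simp
    nlinarith [sq_nonneg (|x| - 1 / 2)]
  calc 1 / (x ^ 2 + 1) = 1 / (|x| ^ 2 + 1) := by rw [sq_abs]
    _ < (5 / 6 * (π / A)) ^ 2 := hnum
    _ ≤ |sin (x * π)| ^ 2 := by gcongr
    _ = sin (x * π) ^ 2 := sq_abs _

theorem sin_sq_sqrt_two_mul_int_gt (d : ℤ) (hd : d ≠ 0) :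
    Real.sin (Real.sqrt 2 * d * Real.pi) ^ 2 > 1 / (2 * (d : ℝ) ^ 2 + 1) := by
  have hsq : (√2 * d) ^ 2 = ((2 * d ^ 2 : ℤ) : ℝ) := by
    push_cast; rw [mul_pow, sq_sqrt zero_le_two]
  have hsize : √2 ≤ |√2 * d| := by
    rw [abs_mul, abs_of_nonneg (sqrt_nonneg 2)]
    exact le_mul_of_one_le_right (sqrt_nonneg 2) (by exact_mod_cast Int.one_le_abs hd)
  have hbound := sin_sq_mul_pi_gt
    (one_le_abs_sq_sub_sq_of_irrational (irrational_sqrt_two.mul_intCast hd) hsq _) hsize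
  rwa [hsq, Int.cast_mul, Int.cast_ofNat, Int.cast_pow] at hbound
end

section
/- Let k ≥ 1 and n ≥ 0 be natural numbers, and set P_r = 2^{−k(2n+2)} and P_a = (1 − P_r)·2^{−k(2n+1)}. Then P_a(1−P_r)/(P_a + P_r − P_a·P_r) ≥ 1/(1 + 2^{2−k}). (In particular, this acceptance probability tends to 1 as k grows.) -/
/-!
Write `t = 2^{-k(2n+1)}` and `u = 2^{-k}`, so that `P_r = p := t u` and `P_a = (1 - p) t`.
Since `P_a + P_r - P_a P_r = P_a (1 - P_r) + P_r`, the acceptance probability is `x / (x + p)`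
with `x = (1 - p)² t`, and this is at least `1 / (1 + 4u)` as soon as `p ≤ 4 u x`, i.e.
`(1 - p)² ≥ 1/4`, which holds because `p ≤ u ≤ 1/2`.
-/

open Real

theorem one_div_one_add_le_div_add {x p c : ℝ} (hx : 0 < x) (hp : 0 ≤ p) (hpc : p ≤ c * x) :
    1 / (1 + c) ≤ x / (x + p) := by
  have hc : 0 ≤ c := nonneg_of_mul_nonneg_left (hp.trans hpc) hx
  rw [div_le_div_iff₀ (by positivity) (by positivity)]
  linarith

theorem one_div_one_add_four_mul_le_accept {t u : ℝ} (ht : 0 < t) (hu : 0 ≤ u)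
    (htu : t * u ≤ 1 / 2) :
    1 / (1 + 4 * u) ≤
      (1 - t * u) * t * (1 - t * u) /
        ((1 - t * u) * t + t * u - (1 - t * u) * t * (t * u)) := by
  set p := t * u with hp_def
  have hp : 0 ≤ p := mul_nonneg ht.le hu
  have hden : (1 - p) * t + p - (1 - p) * t * p = (1 - p) * t * (1 - p) + p := by ring
  have hp_lt_one : 0 < 1 - p := by linarith
  rw [hden]
  refine one_div_one_add_le_div_add (by positivity) hp ?_
  have hsq : 1 ≤ 4 * (1 - p) ^ 2 := by nlinarith
  calc p = p * 1 := (mul_one p).symm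
    _ ≤ p * (4 * (1 - p) ^ 2) := mul_le_mul_of_nonneg_left hsq hp
    _ = 4 * u * ((1 - p) * t * (1 - p)) := by rw [hp_def]; ring

theorem two_rpow_neg_natCast_le_half {k : ℕ} (hk : 1 ≤ k) : (2 : ℝ) ^ (-(k : ℝ)) ≤ 1 / 2 := by
  calc (2 : ℝ) ^ (-(k : ℝ)) ≤ 2 ^ (-1 : ℝ) :=
        rpow_le_rpow_of_exponent_le one_le_two (by simpa using (Nat.one_le_cast (α := ℝ)).2 hk)
    _ = 1 / 2 := by rw [rpow_neg_one, one_div]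

theorem accept_prob_ge (k n : ℕ) (hk : 1 ≤ k) :
    let Pr : ℝ := (2 : ℝ) ^ (-(k * (2 * n + 2) : ℝ))
    let Pa : ℝ := (1 - Pr) * (2 : ℝ) ^ (-(k * (2 * n + 1) : ℝ))
    Pa * (1 - Pr) / (Pa + Pr - Pa * Pr) ≥ 1 / (1 + (2 : ℝ) ^ ((2 : ℝ) - k)) := by
  intro Pr Pa
  set t : ℝ := (2 : ℝ) ^ (-(k * (2 * n + 1) : ℝ))
  set u : ℝ := (2 : ℝ) ^ (-(k : ℝ))
  have ht : 0 < t := by positivity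
  have ht_le : t ≤ 1 := rpow_le_one_of_one_le_of_nonpos one_le_two (by simp only [neg_nonpos]; positivity)
  have hu_le : u ≤ 1 / 2 := two_rpow_neg_natCast_le_half hk
  have hPr : Pr = t * u := by
    simp only [Pr, t, u, ← rpow_add two_pos]
    ring_nf
  have hfour : (2 : ℝ) ^ ((2 : ℝ) - k) = 4 * u := by
    rw [sub_eq_add_neg, rpow_add two_pos, rpow_two]
    norm_num [u]
  have hPa : Pa = (1 - t * u) * t := by simp only [Pa, hPr, t]
  rw [hfour, hPa, hPr, ge_iff_le]
  exact one_div_one_add_four_mul_le_accept ht (by positivity) (by nlinarith)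
end

section
/- Let k ≥ 1 and l ≥ 1 be natural numbers, and let P_a and P_r be real numbers with 0 < P_a ≤ 2^{−k·l} and 2^{−k(l−1)−1} ≤ P_r ≤ 1. Then P_r/(P_a + P_r − P_a·P_r) ≥ 1/(1 + 2^{−(k−1)}). (In particular, this rejection probability tends to 1 as k grows.) -/
open Real

lemma one_div_one_add_le_div_add_sub_mul {a r c : ℝ} (ha : 0 < a) (ha_le : a ≤ 1) (hr : 0 < r)
    (hac : a ≤ r * c) : 1 / (1 + c) ≤ r / (a + r - a * r) := by
  have hc : 0 < c := pos_of_mul_pos_right (ha.trans_le hac) hr.le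
  have hden : 0 < a + r - a * r := by nlinarith [mul_nonneg hr.le (sub_nonneg.2 ha_le)]
  rw [div_le_div_iff₀ (by positivity) hden]
  nlinarith [mul_pos ha hr]

lemma rpow_neg_mul_eq_mul (b k l : ℝ) (hb : 0 < b) :
    b ^ (-(k * l)) = b ^ (-(k * (l - 1)) - 1) * b ^ (-(k - 1)) := by
  rw [← rpow_add hb]
  ring_nf

theorem reject_prob_ge_general (k l : ℕ) (Pa Pr : ℝ)
    (ha : 0 < Pa) (ha' : Pa ≤ (2 : ℝ) ^ (-(k * l : ℝ)))
    (hr : (2 : ℝ) ^ (-(k * (l - 1) : ℝ) - 1) ≤ Pr) :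
    Pr / (Pa + Pr - Pa * Pr) ≥ 1 / (1 + (2 : ℝ) ^ (-((k : ℝ) - 1))) := by
  have hPa_le : Pa ≤ 1 :=
    ha'.trans (rpow_le_one_of_one_le_of_nonpos one_le_two (neg_nonpos.2 (by positivity)))
  have hPr : 0 < Pr := (rpow_pos_of_pos two_pos _).trans_le hr
  refine one_div_one_add_le_div_add_sub_mul ha hPa_le hPr (ha'.trans ?_)
  rw [rpow_neg_mul_eq_mul 2 k l two_pos]
  exact mul_le_mul_of_nonneg_right hr (rpow_nonneg zero_le_two _)

theorem reject_prob_ge (k l : ℕ) (hk : 1 ≤ k) (hl : 1 ≤ l) (Pa Pr : ℝ)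
    (ha : 0 < Pa) (ha' : Pa ≤ (2 : ℝ) ^ (-(k * l : ℝ)))
    (hr : (2 : ℝ) ^ (-(k * (l - 1) : ℝ) - 1) ≤ Pr) (hr' : Pr ≤ 1) :
    Pr / (Pa + Pr - Pa * Pr) ≥ 1 / (1 + (2 : ℝ) ^ (-((k : ℝ) - 1))) :=
  reject_prob_ge_general k l Pa Pr ha ha' hr
end
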